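/- If S ⊆ ℝ³ is a set such that for every ε > 0 there exists r₀ > 0 so that for all x ∈ S and all 0 < r < r₀ there is an affine line A ⊆ ℝ³ with S ∩ B(x, r) ⊆ {y : dist(y, A) < ε·r}, then the Hausdorff dimension of S is at most 1. -/

import Mathlib

open Metric MeasureTheory

/-- An affine line in `ℝ³`, given as the set `{p + t • v}` for some `v ≠ 0`. -/
def IsAffineLine (A : Set (EuclideanSpace ℝ (Fin 3))) : Prop :=
  ∃ (p v : EuclideanSpace ℝ (Fin 3)), v ≠ 0 ∧ A = {y | ∃ t : ℝ, y = p + t • v}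

/-!
For `d > 1` we show `μH[d] S = 0`. At every scale `r < r₀` the set `S ∩ B(x, r)` lies in the
`εr`-neighbourhood of a segment of length `4r`, hence is covered by `M = ⌊4/ε⌋ + 1` balls of
radius `4εr` centred in `S`. Iterating, `S ∩ B(x, r)` is covered by `M^k` balls of radius
`(4ε)^k r`, so its `d`-dimensional Hausdorff content is `≲ (M (4ε)^d)^k`. As
`M (4ε)^d ≲ ε^(d-1)`, the ratio is `< 1` for small `ε`, and the content tends to `0`.
-/

open Filter Topology Set
open scoped NNReal

section PseudoMetric

variable {X : Type*} [PseudoMetricSpace X]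

theorem ediam_ball_le_ofReal {c : X} {ρ : ℝ} : ediam (ball c ρ) ≤ ENNReal.ofReal (2 * ρ) :=
  ediam_le_of_forall_dist_le fun y hy z hz => by
    linarith [dist_triangle_right y z c, mem_ball.1 hy, mem_ball.1 hz]

theorem exists_centers_mem_of_subset_iUnion_ball {ι : Type*} {T : Set X} (hT : T.Nonempty)
    {g : ι → X} {ρ : ℝ} (h : T ⊆ ⋃ j, ball (g j) ρ) :
    ∃ c : ι → X, (∀ j, c j ∈ T) ∧ T ⊆ ⋃ j, ball (c j) (2 * ρ) := by
  classical
  refine ⟨fun j => if hj : (T ∩ ball (g j) ρ).Nonempty then hj.some else hT.some,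
    fun j => ?_, fun y hy => ?_⟩
  · dsimp only
    split_ifs with hj
    exacts [hj.some_mem.1, hT.some_mem]
  · obtain ⟨j, hyj⟩ := mem_iUnion.1 (h hy)
    have hj : (T ∩ ball (g j) ρ).Nonempty := ⟨y, hy, hyj⟩
    refine mem_iUnion.2 ⟨j, ?_⟩
    dsimp only
    rw [dif_pos hj, mem_ball]
    linarith [dist_triangle_right y hj.some (g j), mem_ball.1 hyj, mem_ball.1 hj.some_mem.2]

end PseudoMetric

section Covers

variable {X : Type*} [MetricSpace X]

/-- The centres lie in `S`, so that the covering can be iterated. -/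
def HasScaledCovers (S : Set X) (M : ℕ) (q r₀ : ℝ) : Prop :=
  ∀ x ∈ S, ∀ r, 0 < r → r < r₀ →
    ∃ c : Fin M → X, (∀ j, c j ∈ S) ∧ S ∩ ball x r ⊆ ⋃ j, ball (c j) (q * r)

namespace HasScaledCovers

variable {S : Set X} {M : ℕ} {q r₀ r : ℝ} {x : X}

theorem iterate (h : HasScaledCovers S M q r₀) (hq0 : 0 < q) (hq1 : q ≤ 1) (hx : x ∈ S)
    (hr : 0 < r) (hr₀ : r < r₀) (k : ℕ) :
    ∃ c : (Fin k → Fin M) → X, (∀ f, c f ∈ S) ∧ S ∩ ball x r ⊆ ⋃ f, ball (c f) (q ^ k * r) := by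
  induction k with
  | zero =>
    exact ⟨fun _ => x, fun _ => hx, fun y hy => mem_iUnion.2 ⟨Fin.elim0, by simpa using hy.2⟩⟩
  | succ k ih =>
    obtain ⟨c, hcS, hcover⟩ := ih
    have hrk : q ^ k * r ≤ r := mul_le_of_le_one_left hr.le (pow_le_one₀ hq0.le hq1)
    choose d hdS hdcover using fun f => h (c f) (hcS f) (q ^ k * r) (by positivity)
      (hrk.trans_lt hr₀)
    refine ⟨fun f => d (Fin.tail f) (f 0), fun f => hdS _ _, fun y hy => ?_⟩
    obtain ⟨f, hyf⟩ := mem_iUnion.1 (hcover hy)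
    obtain ⟨j, hyj⟩ := mem_iUnion.1 (hdcover f ⟨hy.1, hyf⟩)
    refine mem_iUnion.2 ⟨Fin.cons j f, ?_⟩
    simpa only [Fin.tail_cons, Fin.cons_zero, pow_succ', mul_assoc] using hyj

variable [MeasurableSpace X] [BorelSpace X]

theorem hausdorffMeasure_inter_ball_eq_zero (h : HasScaledCovers S M q r₀) (hq0 : 0 < q)
    (hq1 : q < 1) {d : ℝ} (hd : 0 ≤ d) (hMq : M * q ^ d < 1) (hx : x ∈ S) (hr : 0 < r)
    (hr₀ : r < r₀) : μH[d] (S ∩ ball x r) = 0 := by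
  choose c _ hcover using h.iterate hq0 hq1.le hx hr hr₀
  have hq_lim : Tendsto (fun k : ℕ => q ^ k) atTop (𝓝 0) :=
    tendsto_pow_atTop_nhds_zero_of_lt_one hq0.le hq1
  have hsum (k : ℕ) : ∑ f, ediam (ball (c k f) (q ^ k * r)) ^ d ≤
      ENNReal.ofReal ((2 * r) ^ d * (M * q ^ d) ^ k) := by
    calc ∑ f, ediam (ball (c k f) (q ^ k * r)) ^ d
        ≤ ∑ _f : Fin k → Fin M, ENNReal.ofReal (2 * (q ^ k * r)) ^ d :=
          Finset.sum_le_sum fun f _ => ENNReal.rpow_le_rpow ediam_ball_le_ofReal hd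
      _ = ENNReal.ofReal ((2 * r) ^ d * (M * q ^ d) ^ k) := by
          rw [Finset.sum_const, Finset.card_univ, Fintype.card_fun, Fintype.card_fin,
            Fintype.card_fin, nsmul_eq_mul, ENNReal.ofReal_rpow_of_nonneg (by positivity) hd,
            ← ENNReal.ofReal_natCast, ← ENNReal.ofReal_mul (by positivity)]
          congr 1
          have hpow : (q ^ k) ^ d = (q ^ d) ^ k := by
            rw [← Real.rpow_natCast, ← Real.rpow_mul hq0.le, mul_comm, Real.rpow_mul hq0.le,
              Real.rpow_natCast]
          rw [show 2 * (q ^ k * r) = q ^ k * (2 * r) by ring,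
            Real.mul_rpow (by positivity) (by positivity), hpow]
          push_cast
          ring
  have hbound_lim : Tendsto (fun k : ℕ => ENNReal.ofReal ((2 * r) ^ d * (M * q ^ d) ^ k))
      atTop (𝓝 0) := by
    simpa using ENNReal.tendsto_ofReal ((tendsto_pow_atTop_nhds_zero_of_lt_one
      (by positivity) hMq).const_mul ((2 * r) ^ d))
  refine le_antisymm ?_ zero_le
  calc μH[d] (S ∩ ball x r)
      ≤ liminf (fun k => ∑ f, ediam (ball (c k f) (q ^ k * r)) ^ d) atTop :=
        Measure.hausdorffMeasure_le_liminf_sum d _ (fun k => ENNReal.ofReal (2 * (q ^ k * r)))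
          (by simpa using ENNReal.tendsto_ofReal ((hq_lim.mul_const r).const_mul 2))
          (fun k f => ball (c k f) (q ^ k * r)) (.of_forall fun _ _ => ediam_ball_le_ofReal)
          (.of_forall hcover)
    _ ≤ liminf (fun k : ℕ => ENNReal.ofReal ((2 * r) ^ d * (M * q ^ d) ^ k)) atTop :=
        liminf_le_liminf (.of_forall hsum)
    _ = 0 := hbound_lim.liminf_eq

theorem hausdorffMeasure_eq_zero [SecondCountableTopology X] (h : HasScaledCovers S M q r₀)
    (hq0 : 0 < q) (hq1 : q < 1) {d : ℝ} (hd : 0 ≤ d) (hMq : M * q ^ d < 1) (hr₀ : 0 < r₀) :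
    μH[d] S = 0 := by
  obtain ⟨T, hTS, hT, hST⟩ := TopologicalSpace.countable_cover_nhdsWithin
    (f := fun x => S ∩ ball x (r₀ / 2)) fun x _ =>
      inter_mem_nhdsWithin S (ball_mem_nhds x (by positivity))
  exact measure_mono_null hST <| (measure_biUnion_null_iff hT).2 fun x hx =>
    h.hausdorffMeasure_inter_ball_eq_zero hq0 hq1 hd hMq (hTS hx) (by positivity) (by linarith)

end HasScaledCovers

end Covers

theorem exists_fin_abs_sub_mul_lt {s δ : ℝ} {N : ℕ} (hδ : 0 < δ) (hs0 : 0 ≤ s)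
    (hsN : s < (N + 1) * δ) : ∃ j : Fin (N + 1), |s - j * δ| < δ := by
  have hq : 0 ≤ s / δ := div_nonneg hs0 hδ.le
  refine ⟨⟨⌊s / δ⌋₊, (Nat.floor_lt hq).2 ?_⟩, ?_⟩
  · rw [div_lt_iff₀ hδ]
    exact_mod_cast hsN
  · have h1 := Nat.floor_le hq
    have h2 := Nat.lt_floor_add_one (s / δ)
    rw [le_div_iff₀ hδ] at h1
    rw [div_lt_iff₀ hδ] at h2
    rw [abs_lt]
    constructor <;> push_cast <;> nlinarith

theorem exists_cover_of_subset_infDist_line_lt {E : Type*} [NormedAddCommGroup E]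
    [NormedSpace ℝ E] {S : Set E} {p u x : E} {ε r : ℝ} (hu : ‖u‖ = 1) (hε0 : 0 < ε)
    (hε : ε ≤ 1 / 2) (hx : x ∈ S) (hr : 0 < r)
    (hflat : S ∩ ball x r ⊆ {y | infDist y (range fun t : ℝ => p + t • u) < ε * r}) :
    ∃ c : Fin (⌊4 / ε⌋₊ + 1) → E, (∀ j, c j ∈ S) ∧
      S ∩ ball x r ⊆ ⋃ j, ball (c j) (4 * ε * r) := by
  set L : ℝ → E := fun t => p + t • u
  have hL (s t : ℝ) : dist (L s) (L t) = |s - t| := by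
    simp [L, dist_eq_norm, ← sub_smul, norm_smul, hu]
  have hnear {y : E} (hy : y ∈ S ∩ ball x r) : ∃ t, dist y (L t) < ε * r := by
    obtain ⟨_, ⟨t, rfl⟩, ht⟩ := (infDist_lt_iff (range_nonempty L)).1 (hflat hy)
    exact ⟨t, ht⟩
  -- every `y ∈ S ∩ B(x, r)` is near some `L t` with `|t - t₀| < 2r`, so a grid of step `εr` on
  -- `[t₀ - 2r, t₀ + 2r]` serves as centres
  obtain ⟨t₀, ht₀⟩ := hnear ⟨hx, mem_ball_self hr⟩
  have hεr : 0 < ε * r := by positivity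
  have hgrid : S ∩ ball x r ⊆
      ⋃ j : Fin (⌊4 / ε⌋₊ + 1), ball (L (t₀ - 2 * r + j * (ε * r))) (2 * (ε * r)) := by
    intro y hy
    obtain ⟨t, ht⟩ := hnear hy
    have htt₀ : |t - t₀| < 2 * r := by
      rw [← hL]
      nlinarith [dist_triangle4 (L t) y x (L t₀), dist_comm y (L t), mem_ball.1 hy.2]
    have h4r : 4 * r < (⌊4 / ε⌋₊ + 1) * (ε * r) :=
      calc 4 * r = 4 / ε * (ε * r) := by field_simp
        _ < _ := mul_lt_mul_of_pos_right (Nat.lt_floor_add_one _) hεr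
    obtain ⟨j, hj⟩ := exists_fin_abs_sub_mul_lt hεr (s := t - (t₀ - 2 * r))
      (by linarith [abs_lt.1 htt₀]) (by linarith [abs_lt.1 htt₀])
    refine mem_iUnion.2 ⟨j, mem_ball.2 ?_⟩
    calc dist y (L _) ≤ dist y (L t) + dist (L t) (L (t₀ - 2 * r + j * (ε * r))) :=
          dist_triangle _ _ _
      _ < ε * r + ε * r := by
          rw [hL, show t - (t₀ - 2 * r + j * (ε * r)) = t - (t₀ - 2 * r) - j * (ε * r) by ring]
          exact add_lt_add ht hj
      _ = 2 * (ε * r) := by ring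
  obtain ⟨c, hcS, hcover⟩ :=
    exists_centers_mem_of_subset_iUnion_ball (T := S ∩ ball x r) ⟨x, hx, mem_ball_self hr⟩
      hgrid
  refine ⟨c, fun j => (hcS j).1, ?_⟩
  rwa [show 4 * ε * r = 2 * (2 * (ε * r)) by ring]

theorem IsAffineLine.exists_eq_range {A : Set (EuclideanSpace ℝ (Fin 3))} (hA : IsAffineLine A) :
    ∃ p u : EuclideanSpace ℝ (Fin 3), ‖u‖ = 1 ∧ A = range fun t : ℝ => p + t • u := by
  obtain ⟨p, v, hv, rfl⟩ := hA
  refine ⟨p, ‖v‖⁻¹ • v, norm_smul_inv_norm hv, ?_⟩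
  ext y
  simp only [mem_range, smul_smul]
  constructor
  · rintro ⟨t, rfl⟩
    exact ⟨t * ‖v‖, by field_simp [norm_ne_zero_iff.2 hv]⟩
  · rintro ⟨s, rfl⟩
    exact ⟨s * ‖v‖⁻¹, rfl⟩

theorem exists_natFloor_succ_mul_rpow_lt_one {d : ℝ} (hd : 1 < d) :
    ∃ ε : ℝ, 0 < ε ∧ ε ≤ 1 / 8 ∧ ((⌊4 / ε⌋₊ + 1 : ℕ) : ℝ) * (4 * ε) ^ d < 1 := by
  have hbound {ε : ℝ} (hε : 0 < ε) (hε1 : ε ≤ 1) :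
      ((⌊4 / ε⌋₊ + 1 : ℕ) : ℝ) * (4 * ε) ^ d ≤ 5 * 4 ^ d * ε ^ (d - 1) := by
    have hM : ((⌊4 / ε⌋₊ + 1 : ℕ) : ℝ) ≤ 5 / ε := by
      have h4 := Nat.floor_le (by positivity : 0 ≤ 4 / ε)
      have h1 : 1 ≤ 1 / ε := by rw [le_div_iff₀ hε]; linarith
      push_cast
      linarith [show 5 / ε = 4 / ε + 1 / ε by ring]
    calc _ ≤ 5 / ε * (4 * ε) ^ d := by gcongr
      _ = 5 * 4 ^ d * ε ^ (d - 1) := by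
          rw [Real.mul_rpow (by norm_num) hε.le, Real.rpow_sub_one hε.ne']
          field_simp
  have hlim : Tendsto (fun ε : ℝ => 5 * 4 ^ d * ε ^ (d - 1)) (𝓝[>] 0) (𝓝 0) := by
    have := ((Real.continuous_rpow_const (by linarith : 0 ≤ d - 1)).tendsto 0).const_mul
      (5 * 4 ^ d)
    rw [Real.zero_rpow (by linarith), mul_zero] at this
    exact this.mono_left nhdsWithin_le_nhds
  obtain ⟨ε, hlt, hε0, hε8⟩ := ((hlim.eventually (gt_mem_nhds one_pos)).and
    (Ioc_mem_nhdsGT (by norm_num : (0 : ℝ) < 1 / 8))).exists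
  exact ⟨ε, hε0, hε8, (hbound hε0 (by linarith)).trans_lt hlt⟩

theorem dimH_le_of_hausdorffMeasure_eq_zero {X : Type*} [EMetricSpace X] [MeasurableSpace X]
    [BorelSpace X] {s : Set X} {d : ℝ≥0} (h : ∀ d' : ℝ≥0, d < d' → μH[d'] s = 0) :
    dimH s ≤ d :=
  dimH_le fun d' hd' => by
    by_contra! hlt
    simp [h d' (by exact_mod_cast hlt)] at hd'

theorem stmt_0 (S : Set (EuclideanSpace ℝ (Fin 3)))
    (hReif : ∀ ε > (0:ℝ), ∃ r₀ > (0:ℝ), ∀ x ∈ S, ∀ r : ℝ, 0 < r → r < r₀ →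
      ∃ A : Set (EuclideanSpace ℝ (Fin 3)), IsAffineLine A ∧
        S ∩ ball x r ⊆ {y | infDist y A < ε * r}) :
    dimH S ≤ 1 := by
  refine dimH_le_of_hausdorffMeasure_eq_zero fun d hd => ?_
  have hd1 : (1 : ℝ) < d := by exact_mod_cast hd
  obtain ⟨ε, hε0, hε8, hMε⟩ := exists_natFloor_succ_mul_rpow_lt_one hd1
  obtain ⟨r₀, hr₀, hflat⟩ := hReif ε hε0
  have hcovers : HasScaledCovers S (⌊4 / ε⌋₊ + 1) (4 * ε) r₀ := by
    intro x hx r hr hrr₀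
    obtain ⟨A, hA, hSA⟩ := hflat x hx r hr hrr₀
    obtain ⟨p, u, hu, rfl⟩ := hA.exists_eq_range
    exact exists_cover_of_subset_infDist_line_lt hu hε0 (by linarith) hx hr hSA
  exact hcovers.hausdorffMeasure_eq_zero (by positivity) (by linarith) d.2 hMε hr₀
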